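/- The CoHa-module of the one-loop quiver with framing n, namely the quotient of Q[φ_0, φ_1, ...] (identified with the shuffle algebra of the loop quiver) by the ideal Σ_{p≥0,q≥1} H_p * (e_q^n ∪ H_q), is isomorphic to the polynomial ring Q[φ_0, φ_1, ..., φ_{n−1}]; equivalently the ideal is generated by φ_n, φ_{n+1}, φ_{n+2}, .... -/

import Mathlib

open MvPolynomial

attribute [local instance] Classical.propDecidable

/-- `(d,e)`-shuffles. -/
def IsShuffle {d e : ℕ} (σ : Equiv.Perm (Fin (d + e))) : Prop :=
  StrictMono (fun i : Fin d => σ (Fin.castAdd e i)) ∧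
    StrictMono (fun j : Fin e => σ (Fin.natAdd d j))

/-- The CoHa product of the one-loop quiver:
`(f*g)(x_1,…,x_{d+e}) = Σ_σ f(x_{σ(1)},…,x_{σ(d)}) g(x_{σ(d+1)},…,x_{σ(d+e)})`,
the sum over `(d,e)`-shuffles. -/
noncomputable def loopMul {d e : ℕ} (f : MvPolynomial (Fin d) ℚ)
    (g : MvPolynomial (Fin e) ℚ) : MvPolynomial (Fin (d + e)) ℚ :=
  ∑ σ ∈ Finset.univ.filter (fun σ : Equiv.Perm (Fin (d + e)) => IsShuffle σ),
    rename (fun i : Fin d => σ (Fin.castAdd e i)) f *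
      rename (fun j : Fin e => σ (Fin.natAdd d j)) g

/-- `φ_i(x) = x^i ∈ ℚ[x]`. -/
noncomputable def phiF (i : ℕ) : MvPolynomial (Fin 1) ℚ := X 0 ^ i

/-- Iterated product `φ_{k_1} * ⋯ * φ_{k_d}`. -/
noncomputable def iterLoop : (d : ℕ) → (Fin d → ℕ) → MvPolynomial (Fin d) ℚ
  | 0, _ => 1
  | d + 1, k => loopMul (iterLoop d (fun i => k i.castSucc)) (phiF (k (Fin.last d)))

/-- The degree-`d` component of the kernel ideal
`Σ_{p≥0,q≥1} H_p * (e_q^n ∪ H_q)` for the one-loop quiver with framing `n`: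
spanned by products `f * ((x_1⋯x_q)^n · g)` with `f` symmetric in `p`
variables, `g` symmetric in `q ≥ 1` variables, `p + q = d`. -/
noncomputable def loopFramingIdeal (n d : ℕ) : Submodule ℚ (MvPolynomial (Fin d) ℚ) :=
  Submodule.span ℚ {z : MvPolynomial (Fin d) ℚ | ∃ (p q : ℕ) (h : p + q = d)
    (f : MvPolynomial (Fin p) ℚ) (g : MvPolynomial (Fin q) ℚ),
    0 < q ∧ f.IsSymmetric ∧ g.IsSymmetric ∧
    cast (congrArg (fun m => MvPolynomial (Fin m) ℚ) h)
      (loopMul f ((∏ j : Fin q, X j) ^ n * g)) = z}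


/-!
Write `m_k = ∑_{π ∈ S_d} π · x^k` for the symmetrization of the monomial `x^k`. Every permutation
of `Fin (p + q)` is uniquely a `(p, q)`-shuffle followed by a permutation of each block, so the
shuffle product of `m_k` and `m_l` is `m_{(k, l)}`; hence `φ_{k_1} * ⋯ * φ_{k_d} = m_k`. Over `ℚ`
every symmetric polynomial is `(d!)⁻¹` times its symmetrization, so the `m_k` span
`ℚ[x_1, …, x_d]^{S_d}`, and multiplying by `e_q^n` adds `n` to every exponent. Therefore the
ideal is spanned by the `m_k` with some `k_i ≥ n`; conversely such an `m_k` is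
`H_{d-1} * (e_1^n ∪ x^{k_i - n})`. The `m_k` with all `k_i < n` span a complement because the two
families are supported on disjoint sets of monomials.
-/

namespace MvPolynomial

section Symmetrize

variable {σ R : Type*} [CommSemiring R] [Fintype σ]

lemma prod_X_pow_eq_monomial' (k : σ → ℕ) :
    ∏ i, (X i : MvPolynomial σ R) ^ k i = monomial (Finsupp.equivFunOnFinite.symm k) 1 := by
  rw [monomial_eq, C_1, one_mul, Finsupp.prod_fintype _ _ fun _ => pow_zero _]
  rfl

lemma rename_prod_X_pow (π : Equiv.Perm σ) (k : σ → ℕ) :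
    rename π (∏ i, (X i : MvPolynomial σ R) ^ k i) = ∏ i, X i ^ k (π.symm i) := by
  simp only [map_prod, map_pow, rename_X]
  exact Fintype.prod_equiv π _ _ fun _ => by simp

variable [DecidableEq σ]

noncomputable def symmetrize : MvPolynomial σ R →ₗ[R] MvPolynomial σ R :=
  ∑ π : Equiv.Perm σ, (rename π).toLinearMap

lemma symmetrize_apply (f : MvPolynomial σ R) :
    symmetrize f = ∑ π : Equiv.Perm σ, rename π f := by
  simp [symmetrize]

lemma isSymmetric_symmetrize (f : MvPolynomial σ R) : (symmetrize f).IsSymmetric := fun π => by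
  simp only [symmetrize_apply, map_sum, rename_rename]
  exact Fintype.sum_equiv (Equiv.mulLeft π) _ _ fun _ => rfl

lemma symmetrize_rename (π : Equiv.Perm σ) (f : MvPolynomial σ R) :
    symmetrize (rename π f) = symmetrize f := by
  simp only [symmetrize_apply, rename_rename]
  exact Fintype.sum_equiv (Equiv.mulRight π) _ _ fun _ => rfl

lemma IsSymmetric.symmetrize_eq {f : MvPolynomial σ R} (hf : f.IsSymmetric) :
    symmetrize f = Fintype.card (Equiv.Perm σ) • f := by
  simp [symmetrize_apply, hf _]

lemma IsSymmetric.symmetrize_mul {a : MvPolynomial σ R} (ha : a.IsSymmetric)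
    (f : MvPolynomial σ R) : symmetrize (a * f) = a * symmetrize f := by
  simp [symmetrize_apply, ha _, Finset.mul_sum]

end Symmetrize

section SymMonomial

variable {σ : Type*} (R : Type*) [CommSemiring R] [Fintype σ] [DecidableEq σ]

noncomputable def symMonomial (k : σ → ℕ) : MvPolynomial σ R :=
  symmetrize (∏ i, X i ^ k i)

variable {R}

lemma symMonomial_comp_perm (k : σ → ℕ) (π : Equiv.Perm σ) :
    symMonomial R (k ∘ π) = symMonomial R k := by
  rw [symMonomial, symMonomial, ← symmetrize_rename π.symm (∏ i, X i ^ k i), rename_prod_X_pow]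
  rfl

lemma isSymmetric_symMonomial (k : σ → ℕ) : (symMonomial R k).IsSymmetric :=
  isSymmetric_symmetrize _

lemma symMonomial_of_unique [Unique σ] (k : σ → ℕ) :
    symMonomial R k = X default ^ k default := by
  simp [symMonomial, symmetrize_apply]

lemma prod_X_pow_mul_symMonomial (n : ℕ) (k : σ → ℕ) :
    (∏ i, (X i : MvPolynomial σ R)) ^ n * symMonomial R k = symMonomial R (k + fun _ => n) := by
  have hsymm : ((∏ i, (X i : MvPolynomial σ R)) ^ n).IsSymmetric := fun π => by
    simp only [map_pow, map_prod, rename_X, Equiv.prod_comp]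
  rw [symMonomial, ← hsymm.symmetrize_mul, symMonomial, ← Finset.prod_pow,
    ← Finset.prod_mul_distrib]
  simp [pow_add, mul_comm]

lemma symMonomial_mem_restrictSupport {k : σ → ℕ} {S : Set (σ →₀ ℕ)}
    (hS : ∀ π : Equiv.Perm σ, Finsupp.equivFunOnFinite.symm (k ∘ π) ∈ S) :
    symMonomial R k ∈ restrictSupport R S := by
  rw [symMonomial, symmetrize_apply]
  refine Submodule.sum_mem _ fun π _ => ?_
  rw [rename_prod_X_pow, prod_X_pow_eq_monomial', monomial_mem_restrictSupport]
  exact Or.inl (hS π.symm)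

end SymMonomial

lemma disjoint_restrictSupport {σ R : Type*} [CommSemiring R] {S T : Set (σ →₀ ℕ)}
    (h : Disjoint S T) : Disjoint (restrictSupport R S) (restrictSupport R T) := by
  rw [Submodule.disjoint_def]
  intro f hS hT
  rw [mem_restrictSupport_iff] at hS hT
  rw [← support_eq_empty, ← Finset.coe_eq_empty]
  exact Set.subset_empty_iff.mp (h hS hT)

lemma IsSymmetric.mem_span_symMonomial {σ K : Type*} [Field K] [CharZero K] [Fintype σ]
    [DecidableEq σ] {f : MvPolynomial σ K} (hf : f.IsSymmetric) :
    f ∈ Submodule.span K (Set.range (symMonomial K)) := by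
  have hcard : (Fintype.card (Equiv.Perm σ) : K) ≠ 0 := Nat.cast_ne_zero.mpr Fintype.card_ne_zero
  have hf' : f = (Fintype.card (Equiv.Perm σ) : K)⁻¹ • symmetrize f := by
    rw [hf.symmetrize_eq, ← Nat.cast_smul_eq_nsmul K, smul_smul, inv_mul_cancel₀ hcard, one_smul]
  have hspan : f ∈ Submodule.span K (Set.range fun e : σ →₀ ℕ => monomial e (1 : K)) := by
    simp [← Set.image_univ, ← restrictSupport_eq_span]
  have himage := Submodule.mem_map_of_mem (f := symmetrize) hspan
  rw [Submodule.map_span, ← Set.range_comp] at himage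
  rw [hf']
  refine Submodule.smul_mem _ _ (Submodule.span_mono ?_ himage)
  rintro _ ⟨e, rfl⟩
  exact ⟨e, by simp [symMonomial, prod_X_pow_eq_monomial']⟩

end MvPolynomial

section Shuffle

variable {p q : ℕ}

def blockPerm (s : Equiv.Perm (Fin p)) (t : Equiv.Perm (Fin q)) : Equiv.Perm (Fin (p + q)) :=
  finSumFinEquiv.permCongr (s.sumCongr t)

@[simp] lemma blockPerm_castAdd (s : Equiv.Perm (Fin p)) (t : Equiv.Perm (Fin q)) (i : Fin p) :
    blockPerm s t (Fin.castAdd q i) = Fin.castAdd q (s i) := by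
  simp [blockPerm, Equiv.permCongr_apply]

@[simp] lemma blockPerm_natAdd (s : Equiv.Perm (Fin p)) (t : Equiv.Perm (Fin q)) (j : Fin q) :
    blockPerm s t (Fin.natAdd p j) = Fin.natAdd p (t j) := by
  simp [blockPerm, Equiv.permCongr_apply]

lemma blockPerm_mul_blockPerm_inv (s : Equiv.Perm (Fin p)) (t : Equiv.Perm (Fin q)) :
    blockPerm s t * blockPerm s⁻¹ t⁻¹ = 1 := by
  ext x
  induction x using Fin.addCases <;> simp [Equiv.Perm.mul_apply]

lemma Equiv.Perm.ext_castAdd_natAdd {σ τ : Equiv.Perm (Fin (p + q))}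
    (hl : ∀ i, σ (Fin.castAdd q i) = τ (Fin.castAdd q i))
    (hr : ∀ j, σ (Fin.natAdd p j) = τ (Fin.natAdd p j)) : σ = τ := by
  ext x
  induction x using Fin.addCases with
  | left i => rw [hl]
  | right j => rw [hr]

lemma IsShuffle.eq_of_mul_blockPerm_eq {σ₁ σ₂ : Equiv.Perm (Fin (p + q))}
    (h₁ : IsShuffle σ₁) (h₂ : IsShuffle σ₂) {s₁ s₂ : Equiv.Perm (Fin p)}
    {t₁ t₂ : Equiv.Perm (Fin q)} (h : σ₁ * blockPerm s₁ t₁ = σ₂ * blockPerm s₂ t₂) :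
    σ₁ = σ₂ := by
  set τ := σ₁ * blockPerm s₁ t₁
  have hσ₁ : σ₁ = τ * blockPerm s₁⁻¹ t₁⁻¹ := by
    rw [mul_assoc, blockPerm_mul_blockPerm_inv, mul_one]
  have hσ₂ : σ₂ = τ * blockPerm s₂⁻¹ t₂⁻¹ := by
    rw [h, mul_assoc, blockPerm_mul_blockPerm_inv, mul_one]
  -- both halves of a shuffle are the sorted rearrangements of the corresponding halves of `τ`
  have hl := Tuple.unique_monotone (f := fun i => τ (Fin.castAdd q i)) (σ := s₁⁻¹) (τ := s₂⁻¹)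
    (by simpa [hσ₁, Function.comp_def] using h₁.1.monotone)
    (by simpa [hσ₂, Function.comp_def] using h₂.1.monotone)
  have hr := Tuple.unique_monotone (f := fun j => τ (Fin.natAdd p j)) (σ := t₁⁻¹) (τ := t₂⁻¹)
    (by simpa [hσ₁, Function.comp_def] using h₁.2.monotone)
    (by simpa [hσ₂, Function.comp_def] using h₂.2.monotone)
  refine Equiv.Perm.ext_castAdd_natAdd (fun i => ?_) (fun j => ?_)
  · simpa [hσ₁, hσ₂] using congrFun hl i
  · simpa [hσ₁, hσ₂] using congrFun hr j

lemma isShuffle_mul_blockPerm_sort (τ : Equiv.Perm (Fin (p + q))) :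
    IsShuffle (τ * blockPerm (Tuple.sort fun i => τ (Fin.castAdd q i))
      (Tuple.sort fun j => τ (Fin.natAdd p j))) := by
  constructor <;> refine Monotone.strictMono_of_injective ?_ fun a b hab => by simpa using hab
  · simpa [Function.comp_def] using Tuple.monotone_sort fun i => τ (Fin.castAdd q i)
  · simpa [Function.comp_def] using Tuple.monotone_sort fun j => τ (Fin.natAdd p j)

noncomputable def shuffleBlockEquiv :
    {σ : Equiv.Perm (Fin (p + q)) // IsShuffle σ} × Equiv.Perm (Fin p) × Equiv.Perm (Fin q) ≃
      Equiv.Perm (Fin (p + q)) :=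
  Equiv.ofBijective (fun x => x.1.1 * blockPerm x.2.1 x.2.2) <| by
    refine ⟨fun ⟨⟨σ₁, h₁⟩, s₁, t₁⟩ ⟨⟨σ₂, h₂⟩, s₂, t₂⟩ h => ?_, fun τ => ?_⟩
    · have hσ := h₁.eq_of_mul_blockPerm_eq h₂ h
      subst hσ
      have hb := mul_left_cancel h
      have hs : s₁ = s₂ := Equiv.ext fun i => by
        simpa using congrArg (fun b : Equiv.Perm _ => b (Fin.castAdd q i)) hb
      have ht : t₁ = t₂ := Equiv.ext fun j => by
        simpa using congrArg (fun b : Equiv.Perm _ => b (Fin.natAdd p j)) hb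
      rw [hs, ht]
    · refine ⟨⟨⟨_, isShuffle_mul_blockPerm_sort τ⟩, (Tuple.sort fun i => τ (Fin.castAdd q i))⁻¹,
        (Tuple.sort fun j => τ (Fin.natAdd p j))⁻¹⟩, ?_⟩
      simp only [mul_assoc, blockPerm_mul_blockPerm_inv, mul_one]

@[simp] lemma shuffleBlockEquiv_apply
    (x : {σ : Equiv.Perm (Fin (p + q)) // IsShuffle σ} × Equiv.Perm (Fin p) × Equiv.Perm (Fin q)) :
    shuffleBlockEquiv x = x.1.1 * blockPerm x.2.1 x.2.2 :=
  rfl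

end Shuffle

open MvPolynomial

noncomputable def loopMulₗ {d e : ℕ} :
    MvPolynomial (Fin d) ℚ →ₗ[ℚ] MvPolynomial (Fin e) ℚ →ₗ[ℚ] MvPolynomial (Fin (d + e)) ℚ :=
  LinearMap.mk₂ ℚ loopMul
    (fun _ _ _ => by simp only [loopMul, map_add, add_mul, Finset.sum_add_distrib])
    (fun _ _ _ => by simp only [loopMul, map_smul, smul_mul_assoc, Finset.smul_sum])
    (fun _ _ _ => by simp only [loopMul, map_add, mul_add, Finset.sum_add_distrib])
    (fun _ _ _ => by simp only [loopMul, map_smul, mul_smul_comm, Finset.smul_sum])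

lemma loopMul_mem_of_mem_span {d e : ℕ} {S : Set (MvPolynomial (Fin d) ℚ)}
    {T : Set (MvPolynomial (Fin e) ℚ)} {U : Submodule ℚ (MvPolynomial (Fin (d + e)) ℚ)}
    (h : ∀ s ∈ S, ∀ t ∈ T, loopMul s t ∈ U) {f : MvPolynomial (Fin d) ℚ}
    {g : MvPolynomial (Fin e) ℚ} (hf : f ∈ Submodule.span ℚ S) (hg : g ∈ Submodule.span ℚ T) :
    loopMul f g ∈ U := by
  have hmem := Submodule.apply_mem_map₂ loopMulₗ hf hg
  rw [Submodule.map₂_span_span] at hmem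
  refine Submodule.span_le.mpr ?_ hmem
  rintro _ ⟨s, hs, t, ht, rfl⟩
  exact h s hs t ht

lemma loopMul_symmetrize {d e : ℕ} (f : MvPolynomial (Fin d) ℚ) (g : MvPolynomial (Fin e) ℚ) :
    loopMul (symmetrize f) (symmetrize g) =
      symmetrize (rename (Fin.castAdd e) f * rename (Fin.natAdd d) g) := by
  conv_rhs => rw [symmetrize_apply, ← (shuffleBlockEquiv (p := d) (q := e)).sum_comp]
  rw [Fintype.sum_prod_type, loopMul,
    Finset.sum_subtype _ fun _ => Finset.mem_filter_univ _]
  refine Fintype.sum_congr _ _ fun σ => ?_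
  simp [symmetrize_apply, Finset.sum_mul_sum, Fintype.sum_prod_type, Function.comp_def]

lemma loopMul_symMonomial {p q : ℕ} (k : Fin p → ℕ) (m : Fin q → ℕ) :
    loopMul (symMonomial ℚ k) (symMonomial ℚ m) = symMonomial ℚ (Fin.append k m) := by
  rw [symMonomial, symMonomial, loopMul_symmetrize, symMonomial, Fin.prod_univ_add]
  simp

lemma iterLoop_eq_symMonomial : ∀ (d : ℕ) (k : Fin d → ℕ), iterLoop d k = symMonomial ℚ k
  | 0, k => by simp [iterLoop, symMonomial, symmetrize_apply]
  | d + 1, k => by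
    rw [iterLoop, iterLoop_eq_symMonomial d, phiF, ← Fin.default_eq_zero,
      ← symMonomial_of_unique (fun _ => k (Fin.last d)), loopMul_symMonomial,
      Fin.append_right_eq_snoc]
    exact congrArg _ (Fin.snoc_init_self k)

lemma exists_antitone_comp_perm {d : ℕ} (k : Fin d → ℕ) :
    ∃ π : Equiv.Perm (Fin d), Antitone (k ∘ π) :=
  ⟨_, monotone_toDual_comp_iff.mp (Tuple.monotone_sort (OrderDual.toDual ∘ k))⟩

def PermInvariant {σ : Type*} (P : (σ → ℕ) → Prop) : Prop :=
  ∀ k (π : Equiv.Perm σ), P k → P (k ∘ π)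

lemma PermInvariant.not {σ : Type*} {P : (σ → ℕ) → Prop} (hP : PermInvariant P) :
    PermInvariant fun k => ¬P k := fun k π hk hkπ =>
  hk (by simpa [Function.comp_assoc] using hP _ π.symm hkπ)

lemma permInvariant_exists_le {σ : Type*} (n : ℕ) : PermInvariant fun k : σ → ℕ => ∃ i, n ≤ k i :=
  fun k π ⟨i, hi⟩ => ⟨π.symm i, by simpa using hi⟩

noncomputable def symMonomialSpan (d : ℕ) (P : (Fin d → ℕ) → Prop) :
    Submodule ℚ (MvPolynomial (Fin d) ℚ) :=
  Submodule.span ℚ {z | ∃ k, Antitone k ∧ P k ∧ symMonomial ℚ k = z}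

section SymMonomialSpan

variable {d : ℕ} {P : (Fin d → ℕ) → Prop}

lemma symMonomial_mem_symMonomialSpan (hP : PermInvariant P) {k : Fin d → ℕ} (hk : P k) :
    symMonomial ℚ k ∈ symMonomialSpan d P := by
  obtain ⟨π, hπ⟩ := exists_antitone_comp_perm k
  exact Submodule.subset_span ⟨k ∘ π, hπ, hP k π hk, symMonomial_comp_perm k π⟩

lemma symMonomialSpan_le_restrictSupport (hP : PermInvariant P) :
    symMonomialSpan d P ≤ restrictSupport ℚ {e | P e} := by
  rw [symMonomialSpan, Submodule.span_le]
  rintro _ ⟨k, -, hk, rfl⟩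
  exact symMonomial_mem_restrictSupport fun π => hP k π hk

lemma symmetricSubalgebra_eq_symMonomialSpan_sup (hP : PermInvariant P) :
    (symmetricSubalgebra (Fin d) ℚ).toSubmodule =
      symMonomialSpan d P ⊔ symMonomialSpan d (fun k => ¬P k) := by
  apply le_antisymm
  · intro f hf
    refine Submodule.span_le.mpr ?_ ((mem_symmetricSubalgebra f).mp hf).mem_span_symMonomial
    rintro _ ⟨k, rfl⟩
    by_cases hk : P k
    · exact Submodule.mem_sup_left (symMonomial_mem_symMonomialSpan hP hk)
    · exact Submodule.mem_sup_right (symMonomial_mem_symMonomialSpan hP.not hk)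
  · refine sup_le ?_ ?_ <;> refine Submodule.span_le.mpr ?_ <;> rintro _ ⟨k, -, -, rfl⟩ <;>
      exact isSymmetric_symMonomial k

lemma disjoint_symMonomialSpan (hP : PermInvariant P) :
    Disjoint (symMonomialSpan d P) (symMonomialSpan d (fun k => ¬P k)) :=
  (disjoint_restrictSupport disjoint_compl_right).mono
    (symMonomialSpan_le_restrictSupport hP) (symMonomialSpan_le_restrictSupport hP.not)

end SymMonomialSpan

lemma loopMul_prod_X_pow_mul_mem_symMonomialSpan {n p q : ℕ} (hq : 0 < q)
    {f : MvPolynomial (Fin p) ℚ} {g : MvPolynomial (Fin q) ℚ} (hf : f.IsSymmetric)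
    (hg : g.IsSymmetric) :
    loopMul f ((∏ j, X j) ^ n * g) ∈ symMonomialSpan (p + q) fun k => ∃ i, n ≤ k i := by
  have hg' := Submodule.mem_map_of_mem (f := LinearMap.mulLeft ℚ ((∏ j, X j) ^ n))
    hg.mem_span_symMonomial
  rw [Submodule.map_span, ← Set.range_comp] at hg'
  refine loopMul_mem_of_mem_span ?_ hf.mem_span_symMonomial hg'
  rintro _ ⟨k, rfl⟩ _ ⟨m, rfl⟩
  rw [Function.comp_apply, LinearMap.mulLeft_apply, prod_X_pow_mul_symMonomial,
    loopMul_symMonomial]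
  exact symMonomial_mem_symMonomialSpan (permInvariant_exists_le n) ⟨Fin.natAdd p ⟨0, hq⟩, by
    rw [Fin.append_right, Pi.add_apply]
    exact Nat.le_add_left n _⟩

lemma symMonomial_mem_loopFramingIdeal {n d : ℕ} {k : Fin d → ℕ} (hk : ∃ i, n ≤ k i) :
    symMonomial ℚ k ∈ loopFramingIdeal n d := by
  obtain ⟨i, hi⟩ := hk
  obtain ⟨p, rfl⟩ := Nat.exists_eq_add_one_of_ne_zero i.pos.ne'
  -- move the large exponent to the last slot, where `φ_{k i} = e_1^n ∪ x^(k i - n)`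
  rw [← symMonomial_comp_perm k (Equiv.swap i (Fin.last p)), ← iterLoop_eq_symMonomial]
  refine Submodule.subset_span ⟨p, 1, rfl, iterLoop p (Fin.init (k ∘ Equiv.swap i (Fin.last p))),
    X 0 ^ (k i - n), one_pos, ?_, ?_, ?_⟩
  · rw [iterLoop_eq_symMonomial]
    exact isSymmetric_symMonomial _
  · intro π
    rw [Subsingleton.elim π 1, Equiv.Perm.coe_one, rename_id_apply]
  · rw [iterLoop, phiF, Function.comp_apply, Equiv.swap_apply_right, Fin.prod_univ_one, ← pow_add,
      Nat.add_sub_cancel' hi]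
    rfl

lemma loopFramingIdeal_eq_symMonomialSpan (n d : ℕ) :
    loopFramingIdeal n d = symMonomialSpan d fun k => ∃ i, n ≤ k i := by
  apply le_antisymm
  · rw [loopFramingIdeal, Submodule.span_le]
    rintro _ ⟨p, q, rfl, f, g, hq, hf, hg, rfl⟩
    exact loopMul_prod_X_pow_mul_mem_symMonomialSpan hq hf hg
  · rw [symMonomialSpan, Submodule.span_le]
    rintro _ ⟨k, -, hk, rfl⟩
    exact symMonomial_mem_loopFramingIdeal hk

/-- the CoHa-module of the one-loop quiver with framing `n`,
i.e. the quotient of `ℚ[φ_0, φ_1, …]` by the ideal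
`Σ_{p≥0,q≥1} H_p * (e_q^n ∪ H_q)`, is the polynomial ring
`ℚ[φ_0, …, φ_{n−1}]`; equivalently the ideal is generated by
`φ_n, φ_{n+1}, φ_{n+2}, …`.  In each degree `d`: the kernel ideal is spanned by
the monomials `φ_{k_1} * ⋯ * φ_{k_d}` (`k_1 ≥ ⋯ ≥ k_d`) with some index
`≥ n`, and the monomials with all indices `< n` span a complement inside
`ℚ[x_1,…,x_d]^{S_d}`. -/
theorem coha_loop_framed_module (n : ℕ) :
    ∀ d : ℕ,
      loopFramingIdeal n d =
        Submodule.span ℚ {z : MvPolynomial (Fin d) ℚ | ∃ k : Fin d → ℕ,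
          Antitone k ∧ (∃ i, n ≤ k i) ∧ iterLoop d k = z} ∧
      (symmetricSubalgebra (Fin d) ℚ).toSubmodule = loopFramingIdeal n d ⊔
        Submodule.span ℚ {z : MvPolynomial (Fin d) ℚ | ∃ k : Fin d → ℕ,
          Antitone k ∧ (∀ i, k i < n) ∧ iterLoop d k = z} ∧
      Disjoint (loopFramingIdeal n d)
        (Submodule.span ℚ {z : MvPolynomial (Fin d) ℚ | ∃ k : Fin d → ℕ,
          Antitone k ∧ (∀ i, k i < n) ∧ iterLoop d k = z}) := by
  intro d
  have hlow : symMonomialSpan d (fun k => ¬∃ i, n ≤ k i) =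
      symMonomialSpan d fun k => ∀ i, k i < n := by
    simp only [not_exists, not_le]
  simp only [iterLoop_eq_symMonomial]
  change _ = symMonomialSpan d _ ∧ _ = _ ⊔ symMonomialSpan d _ ∧ Disjoint _ (symMonomialSpan d _)
  rw [← hlow, loopFramingIdeal_eq_symMonomialSpan]
  exact ⟨rfl, symmetricSubalgebra_eq_symMonomialSpan_sup (permInvariant_exists_le n),
    disjoint_symMonomialSpan (permInvariant_exists_le n)⟩
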